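/- arXiv:1703.11005 — 3 statements merged into one kernel-verified Lean document; each statement's English description precedes it below -/
import Mathlib

section
/- Let A be a finite set of agents and let (S,(∼_a)_{a∈A}) be a proper Kripke frame. For s ∈ S define σ(s) = { (a, [s]_a) : a ∈ A }, where [s]_a denotes the ∼_a-equivalence class of s, a subset of the disjoint union over a ∈ A of the quotients S/∼_a. Then: (1) σ is injective; and (2) for all s, t ∈ S and a ∈ A, the intersection σ(s) ∩ σ(t) contains an element with first component a if and only if s ∼_a t. -/
open Set

theorem Equivalence.setOf_eq_setOf_iff {α : Type*} {r : α → α → Prop} (hr : Equivalence r)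
    {s t : α} : {u | r s u} = {u | r t u} ↔ r s t := by
  refine ⟨fun h => ?_, fun hst => ?_⟩
  · have ht : t ∈ {u | r t u} := hr.refl t
    rwa [← h] at ht
  · ext u
    exact ⟨hr.trans (hr.symm hst), hr.trans hst⟩

theorem mem_range_pair_iff {α β : Type*} {f : α → β} {a : α} {c : β} :
    (a, c) ∈ range (fun b => (b, f b)) ↔ f a = c := by
  rw [← graphOn_univ_eq_range, mem_graphOn]
  exact and_iff_right (mem_univ a)

theorem range_pair_injective {α β : Type*} :
    Function.Injective fun f : α → β => range fun b => (b, f b) := by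
  intro f g h
  simpa only [← graphOn_univ_eq_range, graphOn_univ_inj] using h

theorem sigma_injective_and_intersection_general
    {A S : Type*}
    (r : A → S → S → Prop) (hr : ∀ a, Equivalence (r a))
    (hproper : ∀ u v : S, (∀ a, r a u v) → u = v) :
    -- (1) σ is injective
    Function.Injective
      (fun s : S => Set.range (fun a : A => ((a, {t | r a s t}) : A × Set S))) ∧
    -- (2) σ(s) ∩ σ(t) contains an element with first component a iff s ∼_a t
    (∀ (s t : S) (a : A),
      (∃ c : Set S,
        (a, c) ∈ Set.range (fun b : A => ((b, {u | r b s u}) : A × Set S)) ∧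
        (a, c) ∈ Set.range (fun b : A => ((b, {u | r b t u}) : A × Set S))) ↔
      r a s t) := by
  refine ⟨fun s t hst => ?_, fun s t a => ?_⟩
  · have hclasses : (fun a => {u | r a s u}) = fun a => {u | r a t u} :=
      range_pair_injective hst
    exact hproper s t fun a => (hr a).setOf_eq_setOf_iff.mp (congrFun hclasses a)
  · simp only [mem_range_pair_iff]
    exact ⟨fun ⟨_, hs, ht⟩ => (hr a).setOf_eq_setOf_iff.mp (hs.trans ht.symm),
      fun h => ⟨_, rfl, ((hr a).setOf_eq_setOf_iff.mpr h).symm⟩⟩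

theorem sigma_injective_and_intersection
    {A S : Type*} [Fintype A]
    (r : A → S → S → Prop) (hr : ∀ a, Equivalence (r a))
    (hproper : ∀ u v : S, (∀ a, r a u v) → u = v) :
    -- (1) σ is injective
    Function.Injective
      (fun s : S => Set.range (fun a : A => ((a, {t | r a s t}) : A × Set S))) ∧
    -- (2) σ(s) ∩ σ(t) contains an element with first component a iff s ∼_a t
    (∀ (s t : S) (a : A),
      (∃ c : Set S,
        (a, c) ∈ Set.range (fun b : A => ((b, {u | r b s u}) : A × Set S)) ∧
        (a, c) ∈ Set.range (fun b : A => ((b, {u | r b t u}) : A × Set S))) ↔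
      r a s t) :=
  sigma_injective_and_intersection_general r hr hproper
end

section
/- Let A be a finite set with |A| = n+1 and let (S,(∼_a)_{a∈A}) be a proper Kripke frame. Define σ(s) = { (a, [s]_a) : a ∈ A } and let G(M) be the family of all nonempty subsets of the sets σ(s) for s ∈ S, on the vertex set of pairs (a, [s]_a). Then G(M) is a pure chromatic simplicial complex of dimension n, with coloring given by the first projection (a, [s]_a) ↦ a, and its facets are exactly the sets σ(s) for s ∈ S. -/
/-!
Distinct states of a proper frame have distinct sets `σ s`, and since every `σ s` contains the
vertex `(a, [s]_a)` for each agent `a`, an inclusion `σ s ⊆ σ u` forces `[s]_a = [u]_a` for all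
`a`, hence `s = u`. So the `σ s` form an antichain, and the facets of the complex they generate
are exactly the `σ s`, each with one vertex per agent.
-/

open Finset

section GeneratedComplex

variable {ι V : Type*}

def generatedComplex (F : ι → Finset V) : Set (Finset V) :=
  {X | X.Nonempty ∧ ∃ i, X ⊆ F i}

variable {F : ι → Finset V}

theorem generatedComplex_mem_of_subset {X Y : Finset V} (hX : X ∈ generatedComplex F)
    (hYX : Y ⊆ X) (hY : Y.Nonempty) : Y ∈ generatedComplex F :=
  let ⟨i, hXi⟩ := hX.2
  ⟨hY, i, hYX.trans hXi⟩

theorem isFacet_generatedComplex_iff (hne : ∀ i, (F i).Nonempty)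
    (hanti : ∀ i j, F i ⊆ F j → F i = F j) (X : Finset V) :
    (X ∈ generatedComplex F ∧ ∀ Y ∈ generatedComplex F, X ⊆ Y → X = Y) ↔ ∃ i, X = F i := by
  have hF : ∀ i, F i ∈ generatedComplex F := fun i => ⟨hne i, i, subset_rfl⟩
  constructor
  · rintro ⟨⟨-, i, hXi⟩, hmax⟩
    exact ⟨i, hmax (F i) (hF i) hXi⟩
  · rintro ⟨i, rfl⟩
    refine ⟨hF i, fun Y ⟨_, j, hYj⟩ hiY => subset_antisymm hiY ?_⟩
    rw [hanti i j (hiY.trans hYj)]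
    exact hYj

end GeneratedComplex

section KripkeFrame

variable {A S : Type*} [Fintype A] [DecidableEq (A × Set S)] (r : A → S → S → Prop)

/-- `σ(s) = {(a, [s]_a) : a ∈ A}`, with `[s]_a` encoded as the set `{t | r a s t}`. -/
def stateFacet (s : S) : Finset (A × Set S) :=
  univ.image fun a => (a, {t | r a s t})

theorem card_stateFacet (s : S) : (stateFacet r s).card = Fintype.card A :=
  card_image_of_injective _ fun _ _ h => congrArg Prod.fst h

theorem injOn_fst_stateFacet (s : S) : Set.InjOn Prod.fst (stateFacet r s : Set (A × Set S)) := by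
  rintro _ hx _ hy hxy
  simp only [stateFacet, coe_image, coe_univ, Set.image_univ, Set.mem_range] at hx hy
  obtain ⟨a, rfl⟩ := hx
  obtain ⟨b, rfl⟩ := hy
  obtain rfl : a = b := hxy
  rfl

variable {r}

theorem eq_of_stateFacet_subset (hrefl : ∀ a s, r a s s)
    (hproper : ∀ u v : S, (∀ a, r a u v) → u = v) {s u : S}
    (hsu : stateFacet r s ⊆ stateFacet r u) : s = u := by
  refine (hproper u s fun a => ?_).symm
  obtain ⟨b, -, hb⟩ := mem_image.mp (hsu (mem_image_of_mem _ (mem_univ a)))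
  obtain ⟨rfl, hclass⟩ := Prod.mk.inj hb
  have hs : s ∈ {t | r b s t} := hrefl b s
  rwa [← hclass] at hs

end KripkeFrame

theorem kripke_frame_to_complex
    {A S : Type*} [Fintype A] [DecidableEq (A × Set S)] (n : ℕ)
    (hA : Fintype.card A = n + 1)
    (r : A → S → S → Prop) (hr : ∀ a, Equivalence (r a))
    (hproper : ∀ u v : S, (∀ a, r a u v) → u = v) :
    let σ : S → Finset (A × Set S) :=
      fun s => Finset.univ.image (fun a => (a, {t | r a s t}))
    let C : Set (Finset (A × Set S)) := {X | X.Nonempty ∧ ∃ s, X ⊆ σ s}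
    -- C is a simplicial complex (downward closed on nonempty subsets)
    (∀ X ∈ C, ∀ Y : Finset (A × Set S), Y ⊆ X → Y.Nonempty → Y ∈ C) ∧
    -- the coloring by the first projection is injective on every face
    (∀ X ∈ C, Set.InjOn Prod.fst (X : Set (A × Set S))) ∧
    -- the facets of C are exactly the sets σ(s)
    (∀ X : Finset (A × Set S),
      (X ∈ C ∧ ∀ Y ∈ C, X ⊆ Y → X = Y) ↔ ∃ s, X = σ s) ∧
    -- C is pure of dimension n
    (∀ X : Finset (A × Set S),
      (X ∈ C ∧ ∀ Y ∈ C, X ⊆ Y → X = Y) → X.card = n + 1) := by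
  intro σ C
  have hcard (s : S) : (stateFacet r s).card = n + 1 := (card_stateFacet r s).trans hA
  have hfacet : ∀ X, (X ∈ C ∧ ∀ Y ∈ C, X ⊆ Y → X = Y) ↔ ∃ s, X = σ s :=
    isFacet_generatedComplex_iff (F := stateFacet r)
      (fun s => card_pos.mp (by rw [hcard]; omega))
      (fun s u hsu => by rw [eq_of_stateFacet_subset (fun a => (hr a).refl) hproper hsu])
  refine ⟨fun X hX Y => generatedComplex_mem_of_subset hX, ?_, hfacet, ?_⟩
  · rintro X ⟨-, s, hXs⟩
    exact (injOn_fst_stateFacet r s).mono hXs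
  · intro X hX
    obtain ⟨s, rfl⟩ := (hfacet X).mp hX
    exact hcard s
end

section
/- Let C be a pure chromatic simplicial complex of dimension n colored by a set A with |A| = n+1, in which every face is contained in a facet (e.g., C finite). Then: (1) any two facets F, G containing a common vertex v satisfy F ∼_{l(v)} G; (2) the map sending a vertex v of C to the pair (l(v), E), where E is the ∼_{l(v)}-equivalence class of facets of any facet containing v, is well defined and is a bijection from the vertex set of C onto the set of pairs (a, E) with a ∈ A and E a ∼_a-equivalence class of facets of C. -/
/-!
A facet has `n + 1` vertices with pairwise distinct colours out of `n + 1`, so it contains exactly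
one vertex of each colour. Hence the facets sharing a vertex of colour `a` with a facet `F` are
precisely the facets through the `a`-coloured vertex of `F`, and a vertex `v` is recovered from
the pair `(l v, E)` as the vertex of colour `l v` of any facet in `E`.
-/

open Set

namespace ChromaticComplex

variable {V A : Type*}

def IsFacet (C : Set (Finset V)) (F : Finset V) : Prop :=
  F ∈ C ∧ ∀ Y ∈ C, F ⊆ Y → F = Y

def facetsThrough (C : Set (Finset V)) (v : V) : Set (Finset V) :=
  {G | IsFacet C G ∧ v ∈ G}

/-- The `∼_a`-equivalence class of the facet `F`. -/
def colorClass (C : Set (Finset V)) (l : V → A) (F : Finset V) (a : A) : Set (Finset V) :=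
  {G | IsFacet C G ∧ ∃ w, w ∈ G ∧ w ∈ F ∧ l w = a}

variable {C : Set (Finset V)} {l : V → A}

theorem exists_mem_color_eq [Fintype A] {F : Finset V} (hl : InjOn l F)
    (hcard : F.card = Fintype.card A) (a : A) : ∃ v ∈ F, l v = a := by
  classical
  have himage : F.image l = Finset.univ :=
    Finset.eq_univ_of_card _ (by rw [Finset.card_image_of_injOn hl, hcard])
  simpa [← himage] using Finset.mem_univ a

theorem colorClass_eq_facetsThrough {F : Finset V} (hl : InjOn l F) {v : V} (hv : v ∈ F) :
    colorClass C l F (l v) = facetsThrough C v := by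
  ext G
  constructor
  · rintro ⟨hG, w, hwG, hwF, hlw⟩
    exact ⟨hG, hl hwF hv hlw ▸ hwG⟩
  · rintro ⟨hG, hvG⟩
    exact ⟨hG, v, hvG, hv, rfl⟩

theorem exists_isFacet_mem (hfacet : ∀ X ∈ C, ∃ F, IsFacet C F ∧ X ⊆ F) {v : V}
    (hv : ∃ X ∈ C, v ∈ X) : ∃ F, IsFacet C F ∧ v ∈ F := by
  obtain ⟨X, hX, hvX⟩ := hv
  obtain ⟨F, hF, hXF⟩ := hfacet X hX
  exact ⟨F, hF, hXF hvX⟩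

theorem mem_of_facetsThrough_eq {F : Finset V} (hF : IsFacet C F) {v v' : V} (hv : v ∈ F)
    (h : facetsThrough C v = facetsThrough C v') : v' ∈ F := by
  have hF' : F ∈ facetsThrough C v := ⟨hF, hv⟩
  exact (h ▸ hF').2

theorem bijOn_color_facetsThrough [Fintype A] (hinj : ∀ X ∈ C, InjOn l X)
    (hpure : ∀ F, IsFacet C F → F.card = Fintype.card A)
    (hfacet : ∀ X ∈ C, ∃ F, IsFacet C F ∧ X ⊆ F) :
    BijOn (fun v => (l v, facetsThrough C v)) {v | ∃ X ∈ C, v ∈ X}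
      {p | ∃ F, IsFacet C F ∧ p.2 = colorClass C l F p.1} := by
  refine ⟨fun v hv => ?_, fun v hv v' _ heq => ?_, fun ⟨a, E⟩ ⟨F, hF, hE⟩ => ?_⟩
  · obtain ⟨F, hF, hvF⟩ := exists_isFacet_mem hfacet hv
    exact ⟨F, hF, (colorClass_eq_facetsThrough (hinj F hF.1) hvF).symm⟩
  · obtain ⟨F, hF, hvF⟩ := exists_isFacet_mem hfacet hv
    have hv'F := mem_of_facetsThrough_eq hF hvF (congrArg Prod.snd heq)
    exact hinj F hF.1 hvF hv'F (congrArg Prod.fst heq)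
  · obtain ⟨v, hvF, rfl⟩ := exists_mem_color_eq (hinj F hF.1) (hpure F hF) a
    refine ⟨v, ⟨F, hF.1, hvF⟩, ?_⟩
    rw [show E = colorClass C l F (l v) from hE, colorClass_eq_facetsThrough (hinj F hF.1) hvF]

end ChromaticComplex

open ChromaticComplex in
theorem vertices_as_color_class_pairs_general
    {V A : Type*} [Fintype A] (n : ℕ) (hA : Fintype.card A = n + 1)
    (C : Set (Finset V))
    (l : V → A)
    (hinj : ∀ X ∈ C, Set.InjOn l (X : Set V))
    (hpure : ∀ X : Finset V, (X ∈ C ∧ ∀ Y ∈ C, X ⊆ Y → X = Y) → X.card = n + 1)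
    (hfacet : ∀ X ∈ C, ∃ F : Finset V, (F ∈ C ∧ ∀ Y ∈ C, F ⊆ Y → F = Y) ∧ X ⊆ F) :
    -- (1) two facets containing a common vertex v are ∼_{l v}-related
    (∀ F G : Finset V,
      (F ∈ C ∧ ∀ Y ∈ C, F ⊆ Y → F = Y) → (G ∈ C ∧ ∀ Y ∈ C, G ⊆ Y → G = Y) →
      ∀ v, v ∈ F → v ∈ G → ∃ w, w ∈ F ∧ w ∈ G ∧ l w = l v) ∧
    -- (2) well-definedness: the ∼_{l v}-class of any facet F containing v
    -- is exactly the set of facets containing v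
    (∀ (v : V) (F : Finset V),
      (F ∈ C ∧ ∀ Y ∈ C, F ⊆ Y → F = Y) → v ∈ F →
      {G : Finset V | (G ∈ C ∧ ∀ Y ∈ C, G ⊆ Y → G = Y) ∧ ∃ w, w ∈ G ∧ w ∈ F ∧ l w = l v}
        = {G : Finset V | (G ∈ C ∧ ∀ Y ∈ C, G ⊆ Y → G = Y) ∧ v ∈ G}) ∧
    -- the map is a bijection from the vertex set of C onto the pairs
    -- (a, E) with E a ∼_a-equivalence class of facets
    Set.BijOn
      (fun v : V =>
        ((l v, {G : Finset V | (G ∈ C ∧ ∀ Y ∈ C, G ⊆ Y → G = Y) ∧ v ∈ G}) :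
          A × Set (Finset V)))
      {v : V | ∃ X ∈ C, v ∈ X}
      {p : A × Set (Finset V) |
        ∃ F : Finset V, (F ∈ C ∧ ∀ Y ∈ C, F ⊆ Y → F = Y) ∧
          p.2 = {G : Finset V |
            (G ∈ C ∧ ∀ Y ∈ C, G ⊆ Y → G = Y) ∧ ∃ w, w ∈ G ∧ w ∈ F ∧ l w = p.1}} :=
  ⟨fun _ _ _ _ v hvF hvG => ⟨v, hvF, hvG, rfl⟩,
    fun _ F hF hv => colorClass_eq_facetsThrough (hinj F hF.1) hv,
    bijOn_color_facetsThrough hinj (fun F hF => (hpure F hF).trans hA.symm) hfacet⟩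

theorem vertices_as_color_class_pairs
    {V A : Type*} [Fintype A] (n : ℕ) (hA : Fintype.card A = n + 1)
    (C : Set (Finset V))
    (hne : ∀ X ∈ C, X.Nonempty)
    (hdc : ∀ X ∈ C, ∀ Y : Finset V, Y ⊆ X → Y.Nonempty → Y ∈ C)
    (l : V → A)
    (hinj : ∀ X ∈ C, Set.InjOn l (X : Set V))
    (hpure : ∀ X : Finset V, (X ∈ C ∧ ∀ Y ∈ C, X ⊆ Y → X = Y) → X.card = n + 1)
    (hfacet : ∀ X ∈ C, ∃ F : Finset V, (F ∈ C ∧ ∀ Y ∈ C, F ⊆ Y → F = Y) ∧ X ⊆ F) :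
    -- (1) two facets containing a common vertex v are ∼_{l v}-related
    (∀ F G : Finset V,
      (F ∈ C ∧ ∀ Y ∈ C, F ⊆ Y → F = Y) → (G ∈ C ∧ ∀ Y ∈ C, G ⊆ Y → G = Y) →
      ∀ v, v ∈ F → v ∈ G → ∃ w, w ∈ F ∧ w ∈ G ∧ l w = l v) ∧
    -- (2) well-definedness: the ∼_{l v}-class of any facet F containing v
    -- is exactly the set of facets containing v
    (∀ (v : V) (F : Finset V),
      (F ∈ C ∧ ∀ Y ∈ C, F ⊆ Y → F = Y) → v ∈ F →
      {G : Finset V | (G ∈ C ∧ ∀ Y ∈ C, G ⊆ Y → G = Y) ∧ ∃ w, w ∈ G ∧ w ∈ F ∧ l w = l v}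
        = {G : Finset V | (G ∈ C ∧ ∀ Y ∈ C, G ⊆ Y → G = Y) ∧ v ∈ G}) ∧
    -- the map is a bijection from the vertex set of C onto the pairs
    -- (a, E) with E a ∼_a-equivalence class of facets
    Set.BijOn
      (fun v : V =>
        ((l v, {G : Finset V | (G ∈ C ∧ ∀ Y ∈ C, G ⊆ Y → G = Y) ∧ v ∈ G}) :
          A × Set (Finset V)))
      {v : V | ∃ X ∈ C, v ∈ X}
      {p : A × Set (Finset V) |
        ∃ F : Finset V, (F ∈ C ∧ ∀ Y ∈ C, F ⊆ Y → F = Y) ∧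
          p.2 = {G : Finset V |
            (G ∈ C ∧ ∀ Y ∈ C, G ⊆ Y → G = Y) ∧ ∃ w, w ∈ G ∧ w ∈ F ∧ l w = p.1}} :=
  vertices_as_color_class_pairs_general n hA C l hinj hpure hfacet
end
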